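/- arXiv:1204.3602 — 2 statements merged into one kernel-verified Lean document; each statement's English description precedes it below -/
import Mathlib

section
/- In the quantum Weyl algebra D_q at a primitive p-th root of unity q (p prime), the elements x^p and δ^p are central: [δ, x^p] = [δ^p, x] = [δ^p, x^p] = 0. -/
noncomputable section

/-- The quantum integer `[n] = 1 + q + ⋯ + q^(n-1)`. -/
def qint {R : Type} [CommRing R] (q : R) (n : ℕ) : R := ∑ k ∈ Finset.range n, q ^ k

/-- The defining relation `δx = q·xδ + 1` of the quantum Weyl algebra
(generator `0` is `x`, generator `1` is `δ`). -/
inductive WeylRel (R : Type) [CommRing R] (q : R) :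
    FreeAlgebra R (Fin 2) → FreeAlgebra R (Fin 2) → Prop
  | rel : WeylRel R q (FreeAlgebra.ι R 1 * FreeAlgebra.ι R 0)
      (q • (FreeAlgebra.ι R 0 * FreeAlgebra.ι R 1) + 1)

/-- The quantum Weyl algebra `D_q = R⟨x,δ⟩/(δx - qxδ - 1)`. -/
def Weyl (R : Type) [CommRing R] (q : R) := RingQuot (WeylRel R q)

instance (R : Type) [CommRing R] (q : R) : Ring (Weyl R q) :=
  inferInstanceAs (Ring (RingQuot _))

instance (R : Type) [CommRing R] (q : R) : Algebra R (Weyl R q) :=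
  inferInstanceAs (Algebra R (RingQuot _))

/-- The generator `x` of the quantum Weyl algebra. -/
def Wx (R : Type) [CommRing R] (q : R) : Weyl R q :=
  RingQuot.mkAlgHom R (WeylRel R q) (FreeAlgebra.ι R 0)

/-- The generator `δ` of the quantum Weyl algebra. -/
def Wd (R : Type) [CommRing R] (q : R) : Weyl R q :=
  RingQuot.mkAlgHom R (WeylRel R q) (FreeAlgebra.ι R 1)

/-!
From `δx = q·xδ + 1` one gets by induction `δxⁿ = qⁿ·xⁿδ + [n]·xⁿ⁻¹`, and symmetrically
`δⁿx = qⁿ·xδⁿ + [n]·δⁿ⁻¹`. At a primitive `p`-th root of unity `q^p = 1` and `[p] = 0`,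
so `x^p` commutes with `δ` and `δ^p` commutes with `x`; hence also with each other.
-/

section QuantumCommutation

variable {R : Type} {A : Type*} [CommRing R] [Ring A] [Algebra R A] {q : R} {d x : A}

lemma qint_succ (q : R) (n : ℕ) : qint q (n + 1) = qint q n + q ^ n :=
  Finset.sum_range_succ _ _

lemma mul_pow_succ_of_mul_eq_smul_add_one (h : d * x = q • (x * d) + 1) (n : ℕ) :
    d * x ^ (n + 1) = q ^ (n + 1) • (x ^ (n + 1) * d) + qint q (n + 1) • x ^ n := by
  induction n with
  | zero => simpa [qint] using h
  | succ n ih =>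
    calc d * x ^ (n + 2) = (d * x ^ (n + 1)) * x := by rw [mul_assoc, ← pow_succ]
      _ = q ^ (n + 1) • (x ^ (n + 1) * (d * x)) + qint q (n + 1) • x ^ (n + 1) := by
        rw [ih, add_mul, smul_mul_assoc, smul_mul_assoc, mul_assoc, ← pow_succ]
      _ = q ^ (n + 2) • (x ^ (n + 2) * d) + qint q (n + 2) • x ^ (n + 1) := by
        rw [h, qint_succ q (n + 1), mul_add, mul_smul_comm, ← mul_assoc, ← pow_succ, mul_one]
        module

lemma commute_pow_of_mul_eq_smul_add_one (h : d * x = q • (x * d) + 1) {n : ℕ}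
    (hqn : q ^ n = 1) (hn : qint q n = 0) : Commute d (x ^ n) := by
  cases n with
  | zero => simp
  | succ n =>
    rw [Commute, SemiconjBy, mul_pow_succ_of_mul_eq_smul_add_one h, hqn, hn, one_smul,
      zero_smul, add_zero]

lemma commute_pow_left_of_mul_eq_smul_add_one (h : d * x = q • (x * d) + 1) {n : ℕ}
    (hqn : q ^ n = 1) (hn : qint q n = 0) : Commute (d ^ n) x := by
  have hop : MulOpposite.op x * MulOpposite.op d
      = q • (MulOpposite.op d * MulOpposite.op x) + 1 := by
    rw [← MulOpposite.op_mul, h, MulOpposite.op_add, MulOpposite.op_smul, MulOpposite.op_mul,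
      MulOpposite.op_one]
  have := (commute_pow_of_mul_eq_smul_add_one hop hqn hn).unop
  simpa [MulOpposite.unop_pow] using this.symm

end QuantumCommutation

lemma Wd_mul_Wx (R : Type) [CommRing R] (q : R) :
    Wd R q * Wx R q = q • (Wx R q * Wd R q) + 1 := by
  have h := RingQuot.mkAlgHom_rel R (WeylRel.rel (R := R) (q := q))
  simp only [map_mul, map_add, map_smul, map_one] at h
  exact h

theorem stmt8_general (p : ℕ) (hp : p.Prime) (R : Type) [CommRing R] [IsDomain R]
    (q : R) (hq : IsPrimitiveRoot q p) :
    Wd R q * Wx R q ^ p - Wx R q ^ p * Wd R q = 0 ∧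
      Wd R q ^ p * Wx R q - Wx R q * Wd R q ^ p = 0 ∧
      Wd R q ^ p * Wx R q ^ p - Wx R q ^ p * Wd R q ^ p = 0 := by
  have hqint : qint q p = 0 := hq.geom_sum_eq_zero hp.one_lt
  have hx : Commute (Wd R q) (Wx R q ^ p) :=
    commute_pow_of_mul_eq_smul_add_one (Wd_mul_Wx R q) hq.pow_eq_one hqint
  have hd : Commute (Wd R q ^ p) (Wx R q) :=
    commute_pow_left_of_mul_eq_smul_add_one (Wd_mul_Wx R q) hq.pow_eq_one hqint
  exact ⟨sub_eq_zero.mpr hx, sub_eq_zero.mpr hd, sub_eq_zero.mpr (hx.pow_left p)⟩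

/-- `x^p` and `δ^p` are central in `D_q`: `[δ, x^p] = [δ^p, x] = [δ^p, x^p] = 0`. -/
theorem stmt8 (p : ℕ) (hp : p.Prime) (R : Type) [CommRing R] [IsDomain R] [CharZero R]
    (q : R) (hq : IsPrimitiveRoot q p) (hgen : Algebra.adjoin ℤ ({q} : Set R) = ⊤) :
    Wd R q * Wx R q ^ p - Wx R q ^ p * Wd R q = 0 ∧
      Wd R q ^ p * Wx R q - Wx R q * Wd R q ^ p = 0 ∧
      Wd R q ^ p * Wx R q ^ p - Wx R q ^ p * Wd R q ^ p = 0 :=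
  stmt8_general p hp R q hq
end
end

section
/- In the quantum Weyl algebra D_q with q a primitive p-th root of unity (p prime), one has σ^p = 1 - (1-q)^p x^p δ^p, where σ = 1 - (1-q)xδ. -/
/-! Put `σ = 1 - (1-q)xδ`. The relation `δσ = qσδ` gives
`x^kδ^k (q^k - σ) = (1-q)q^k x^(k+1)δ^(k+1)`, so by induction
`∏_{i<k} (q^i - σ) = (∏_{i<k} (1-q)q^i) x^kδ^k` (the product is formed in `R[X]` and evaluated
at `σ`, since `D_q` is not commutative). For `k = p` the left side is `(-1)^p (σ^p - 1)`, as
`∏_{i<p} (X - q^i) = X^p - 1`, and evaluating this identity at `0` gives `(-1)^p ∏_{i<p} q^i = -1`. -/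

noncomputable section

open Polynomial Finset

namespace IsPrimitiveRoot

variable {R : Type*} [CommRing R] [IsDomain R] {q : R} {n : ℕ}

theorem X_pow_sub_one_eq_neg_one_pow_mul_prod (hq : IsPrimitiveRoot q n) (hn : 0 < n) :
    (X ^ n - 1 : R[X]) = C ((-1) ^ n) * ∏ i ∈ range n, (C (q ^ i) - X) := by
  have hneg : ∏ i ∈ range n, (C (q ^ i) - X) = (-1) ^ n * ∏ i ∈ range n, (X - C (q ^ i)) :=
    calc ∏ i ∈ range n, (C (q ^ i) - X) = ∏ i ∈ range n, -(X - C (q ^ i)) :=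
          prod_congr rfl fun _ _ ↦ (neg_sub _ _).symm
      _ = (-1) ^ n * ∏ i ∈ range n, (X - C (q ^ i)) := by rw [prod_neg, card_range]
  rw [hneg, ← mul_assoc, ← C_1, X_pow_sub_C_eq_prod hq hn (one_pow n)]
  simp [← mul_pow]

theorem neg_one_pow_mul_prod_range_pow (hq : IsPrimitiveRoot q n) (hn : 0 < n) :
    (-1) ^ n * ∏ i ∈ range n, q ^ i = -1 := by
  simpa [eval_prod, hn.ne'] using
    congrArg (eval 0) (hq.X_pow_sub_one_eq_neg_one_pow_mul_prod hn).symm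

end IsPrimitiveRoot

namespace Weyl

variable (R : Type) [CommRing R] (q : R)

def sigma : Weyl R q := 1 - (1 - q) • (Wx R q * Wd R q)

theorem Wd_mul_Wx : Wd R q * Wx R q = q • (Wx R q * Wd R q) + 1 := by
  have h := RingQuot.mkAlgHom_rel R (WeylRel.rel (R := R) (q := q))
  simp only [map_mul, map_add, map_smul, map_one] at h
  exact h

theorem Wd_mul_sigma : Wd R q * sigma R q = q • (sigma R q * Wd R q) := by
  simp only [sigma, mul_sub, sub_mul, mul_one, one_mul, mul_smul_comm, smul_mul_assoc, ← mul_assoc,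
    Wd_mul_Wx, add_mul]
  module

theorem Wd_pow_mul_sigma (k : ℕ) : Wd R q ^ k * sigma R q = q ^ k • (sigma R q * Wd R q ^ k) := by
  induction k with
  | zero => simp
  | succ k ih =>
    rw [pow_succ, mul_assoc, Wd_mul_sigma, mul_smul_comm, ← mul_assoc, ih, smul_mul_assoc,
      smul_smul, mul_assoc, ← pow_succ, ← pow_succ']

theorem Wx_pow_mul_Wd_pow_mul_sub_sigma (k : ℕ) :
    Wx R q ^ k * Wd R q ^ k * (algebraMap R (Weyl R q) (q ^ k) - sigma R q) =
      ((1 - q) * q ^ k) • (Wx R q ^ (k + 1) * Wd R q ^ (k + 1)) := by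
  have h1 : 1 - sigma R q = (1 - q) • (Wx R q * Wd R q) := by simp [sigma]
  calc Wx R q ^ k * Wd R q ^ k * (algebraMap R (Weyl R q) (q ^ k) - sigma R q)
      = q ^ k • (Wx R q ^ k * (1 - sigma R q) * Wd R q ^ k) := by
        rw [mul_assoc, mul_sub, ← Algebra.commutes, ← Algebra.smul_def, Wd_pow_mul_sigma]
        simp only [mul_sub, sub_mul, mul_one, mul_smul_comm, smul_sub, mul_assoc]
    _ = ((1 - q) * q ^ k) • (Wx R q ^ (k + 1) * Wd R q ^ (k + 1)) := by
        rw [h1, mul_smul_comm, smul_mul_assoc, smul_smul, mul_comm (q ^ k), pow_succ, pow_succ']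
        simp only [mul_assoc]

theorem aeval_sigma_prod_C_pow_sub_X (k : ℕ) :
    aeval (sigma R q) (∏ i ∈ range k, (C (q ^ i) - X)) =
      (∏ i ∈ range k, ((1 - q) * q ^ i)) • (Wx R q ^ k * Wd R q ^ k) := by
  induction k with
  | zero => simp
  | succ k ih =>
    rw [prod_range_succ, map_mul, ih, map_sub, aeval_C, aeval_X, smul_mul_assoc,
      Wx_pow_mul_Wd_pow_mul_sub_sigma, smul_smul, prod_range_succ]

theorem sigma_pow_of_isPrimitiveRoot [IsDomain R] {p : ℕ} (hq : IsPrimitiveRoot q p) (hp : 0 < p) :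
    sigma R q ^ p = 1 - (1 - q) ^ p • (Wx R q ^ p * Wd R q ^ p) := by
  have hc : (-1) ^ p * ∏ i ∈ range p, ((1 - q) * q ^ i) = -(1 - q) ^ p := by
    rw [prod_mul_distrib, prod_const, card_range]
    linear_combination (1 - q) ^ p * hq.neg_one_pow_mul_prod_range_pow hp
  have h := congrArg (aeval (sigma R q)) (hq.X_pow_sub_one_eq_neg_one_pow_mul_prod hp)
  rw [map_sub, map_pow, aeval_X, map_one, map_mul, aeval_C, aeval_sigma_prod_C_pow_sub_X,
    ← Algebra.smul_def, smul_smul, hc, neg_smul, sub_eq_iff_eq_add] at h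
  rw [h]
  abel

end Weyl

theorem stmt11_general (p : ℕ) (hp : p.Prime) (R : Type) [CommRing R] [IsDomain R]
    (q : R) (hq : IsPrimitiveRoot q p) :
    ((1 : Weyl R q) - algebraMap R (Weyl R q) (1 - q) * (Wx R q * Wd R q)) ^ p =
      1 - algebraMap R (Weyl R q) ((1 - q) ^ p) * (Wx R q ^ p * Wd R q ^ p) := by
  simpa only [Weyl.sigma, Algebra.smul_def] using Weyl.sigma_pow_of_isPrimitiveRoot R q hq hp.pos

/-- `σ^p = 1 - (1-q)^p x^p δ^p` in `D_q`, where `σ = 1 - (1-q) x δ`. -/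
theorem stmt11 (p : ℕ) (hp : p.Prime) (R : Type) [CommRing R] [IsDomain R] [CharZero R]
    (q : R) (hq : IsPrimitiveRoot q p) (hgen : Algebra.adjoin ℤ ({q} : Set R) = ⊤) :
    ((1 : Weyl R q) - algebraMap R (Weyl R q) (1 - q) * (Wx R q * Wd R q)) ^ p =
      1 - algebraMap R (Weyl R q) ((1 - q) ^ p) * (Wx R q ^ p * Wd R q ^ p) :=
  stmt11_general p hp R q hq
end
end
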